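/- For any two distinct strings x, y over Σ and any letter λ ∈ Σ: x ≺ y in V-order if and only if λx ≺ λy (where λx denotes x with the letter λ prepended at the left end). -/

import Mathlib

/-!
The star path of `λx` is `λx, λx*, …, λx^{k*}, x^{k*}, x^{(k+1)*}, …`, where `k` is least
with `λx^{k*}` non-decreasing. So prepending `λ` either just prefixes the two strings at
which the star paths of `x` and `y` branch (shifting their last differing position by one),
or moves the branch point one step further, to `λM` against `qM` with `λ < q`. The one
configuration that could reverse the order, a non-decreasing `pM` with `λ < p` below the
branch `Q` of `y`, cannot occur: then `Q = qM` is non-decreasing with `p < q`, so `λQ` is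
non-decreasing as well. This proves `x ≺ y → λx ≺ λy`, and the converse holds because `≺`
is a strict total order on distinct strings.
-/
variable {α : Type*} [LinearOrder α]

/-- The star operation on strings: delete the letter `x_h`, where `h` is the
start of the longest non-decreasing suffix (so `h = 1` iff the whole string is
non-decreasing, and otherwise `x_{h-1} > x_h ≤ x_{h+1} ≤ ⋯ ≤ x_n`). -/
def vstar : List α → List α
  | [] => []
  | a :: t => if List.IsChain (· ≤ ·) (a :: t) then t else a :: vstar t

/-- V-order `≺` between distinct strings `x`, `y`: either `x` lies on the path
`y, y*, y^{2*}, …, ε`, or (if neither lies on the path of the other) taking the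
least `s, t` with `x^{(s+1)*} = y^{(t+1)*}` and the greatest position `j` at
which `s = x^{s*}` and `t = y^{t*}` differ, the letter of `x^{s*}` at `j` is
smaller than that of `y^{t*}`. -/
def VLess (x y : List α) : Prop :=
  (∃ k : ℕ, 0 < k ∧ vstar^[k] y = x) ∨
  ((¬ ∃ k : ℕ, vstar^[k] y = x) ∧ (¬ ∃ k : ℕ, vstar^[k] x = y) ∧
    ∃ s t : ℕ,
      vstar^[s + 1] x = vstar^[t + 1] y ∧
      (∀ s' t' : ℕ, vstar^[s' + 1] x = vstar^[t' + 1] y → s ≤ s' ∧ t ≤ t') ∧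
      ∃ j : ℕ, j < (vstar^[s] x).length ∧
        (∀ j' : ℕ, j < j' → (vstar^[s] x)[j']? = (vstar^[t] y)[j']?) ∧
        ∃ a b : α, (vstar^[s] x)[j]? = some a ∧ (vstar^[t] y)[j]? = some b ∧
          a < b)

section LastDiffLT

variable {β : Type*}

/-- At the last position where `P` and `Q` differ, both have a letter and that of `P` is the
smaller one. -/
def LastDiffLT [LT β] : List β → List β → Prop
  | a :: P, b :: Q => LastDiffLT P Q ∨ (P = Q ∧ a < b)
  | _, _ => False

theorem LastDiffLT.ne_nil_left [LT β] {P Q : List β} (h : LastDiffLT P Q) : P ≠ [] := by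
  rintro rfl
  exact h

theorem LastDiffLT.ne_nil_right [LT β] {P Q : List β} (h : LastDiffLT P Q) : Q ≠ [] := by
  rintro rfl
  cases P <;> exact h

theorem lastDiffLT_iff_exists_index [LT β] {P Q : List β} :
    LastDiffLT P Q ↔ ∃ j : ℕ, (∀ j' : ℕ, j < j' → P[j']? = Q[j']?) ∧
      ∃ a b : β, P[j]? = some a ∧ Q[j]? = some b ∧ a < b := by
  induction P generalizing Q with
  | nil => simp [LastDiffLT]
  | cons a P ih =>
    cases Q with
    | nil => simp [LastDiffLT]
    | cons b Q =>
      constructor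
      · rintro (h | ⟨rfl, hab⟩)
        · obtain ⟨j, htail, c, d, hc, hd, hcd⟩ := ih.1 h
          refine ⟨j + 1, fun j' hj' => ?_, c, d, hc, hd, hcd⟩
          obtain ⟨i, rfl⟩ := Nat.exists_eq_add_of_lt hj'
          simpa [Nat.add_right_comm] using htail (j + i + 1) (by omega)
        · refine ⟨0, fun j' hj' => ?_, a, b, rfl, rfl, hab⟩
          obtain ⟨i, rfl⟩ := Nat.exists_eq_add_of_lt hj'
          simp
      · rintro ⟨j, htail, c, d, hc, hd, hcd⟩
        cases j with
        | zero =>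
          simp only [List.getElem?_cons_zero, Option.some.injEq] at hc hd
          subst hc hd
          exact Or.inr ⟨List.ext_getElem? fun i => by simpa using htail (i + 1) (by omega), hcd⟩
        | succ j =>
          exact Or.inl <| ih.2 ⟨j, fun j' hj' => by simpa using htail (j' + 1) (by omega),
            c, d, by simpa using hc, by simpa using hd, hcd⟩

theorem LastDiffLT.asymm [Preorder β] {P Q : List β} (h : LastDiffLT P Q) :
    ¬ LastDiffLT Q P := by
  induction P generalizing Q with
  | nil => exact absurd h (by simp [LastDiffLT])
  | cons a P ih =>
    cases Q with
    | nil => exact absurd h (by simp [LastDiffLT])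
    | cons b Q =>
      rintro (h' | ⟨rfl, hba⟩)
      · rcases h with h | ⟨rfl, -⟩
        exacts [ih h h', ih h' h']
      · rcases h with h | ⟨-, hab⟩
        exacts [ih h h, lt_asymm hab hba]

theorem LastDiffLT.ne [Preorder β] {P Q : List β} (h : LastDiffLT P Q) : P ≠ Q := by
  rintro rfl
  exact h.asymm h

theorem lastDiffLT_or_lastDiffLT [LinearOrder β] {P Q : List β} (hlen : P.length = Q.length)
    (hne : P ≠ Q) : LastDiffLT P Q ∨ LastDiffLT Q P := by
  induction P generalizing Q with
  | nil => exact absurd (List.length_eq_zero_iff.1 hlen.symm).symm hne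
  | cons a P ih =>
    cases Q with
    | nil => simp at hlen
    | cons b Q =>
      by_cases hPQ : P = Q
      · subst hPQ
        have hab : a ≠ b := fun h => hne (h ▸ rfl)
        rcases hab.lt_or_gt with hab | hba
        exacts [Or.inl (Or.inr ⟨rfl, hab⟩), Or.inr (Or.inr ⟨rfl, hba⟩)]
      · rcases ih (by simpa using hlen) hPQ with h | h
        exacts [Or.inl (Or.inl h), Or.inr (Or.inl h)]

end LastDiffLT

open List (IsChain)

theorem vstar_of_isChain {l : List α} (h : IsChain (· ≤ ·) l) : vstar l = l.tail := by
  cases l with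
  | nil => rfl
  | cons a t => simp [vstar, h]

theorem exists_eq_cons_vstar {l : List α} (h : IsChain (· ≤ ·) l) (hl : l ≠ []) :
    ∃ p, l = p :: vstar l := by
  obtain ⟨p, t, rfl⟩ := List.exists_cons_of_ne_nil hl
  exact ⟨p, by rw [vstar_of_isChain h, List.tail_cons]⟩

theorem length_vstar (l : List α) : (vstar l).length = l.length - 1 := by
  induction l with
  | nil => rfl
  | cons a t ih =>
    by_cases h : IsChain (· ≤ ·) (a :: t)
    · simp [vstar, h]
    · have ht : t ≠ [] := by
        rintro rfl
        exact h (List.isChain_singleton a)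
      have := List.length_pos_iff.2 ht
      simp only [vstar, h, if_false, List.length_cons, ih]
      omega

theorem length_iterate_vstar (k : ℕ) (l : List α) : (vstar^[k] l).length = l.length - k := by
  induction k with
  | zero => simp
  | succ k ih => rw [Function.iterate_succ_apply', length_vstar, ih]; omega

theorem iterate_vstar_eq_nil_iff {k : ℕ} {l : List α} : vstar^[k] l = [] ↔ l.length ≤ k := by
  rw [← List.length_eq_zero_iff, length_iterate_vstar]
  omega

theorem length_eq_of_vstar_eq {P Q : List α} (hP : P ≠ []) (hQ : Q ≠ [])
    (h : vstar P = vstar Q) : P.length = Q.length := by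
  have := congrArg List.length h
  rw [length_vstar, length_vstar] at this
  have := List.length_pos_iff.2 hP
  have := List.length_pos_iff.2 hQ
  omega

theorem eq_of_length_iterate_vstar_eq {l : List α} {m n : ℕ} (hm : vstar^[m] l ≠ [])
    (h : (vstar^[m] l).length = (vstar^[n] l).length) : m = n := by
  rw [Ne, iterate_vstar_eq_nil_iff] at hm
  rw [length_iterate_vstar, length_iterate_vstar] at h
  omega

def starPath (y : List α) : Set (List α) := Set.range fun k => vstar^[k] y

theorem mem_starPath_vstar_iff {x y : List α} :
    x ∈ starPath (vstar y) ↔ ∃ k, vstar^[k + 1] y = x := by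
  simp [starPath, Function.iterate_succ_apply]

theorem mem_starPath_of_mem_starPath_vstar {x y : List α} (h : x ∈ starPath (vstar y)) :
    x ∈ starPath y := by
  obtain ⟨k, rfl⟩ := mem_starPath_vstar_iff.1 h
  exact ⟨k + 1, rfl⟩

theorem mem_starPath_vstar_of_mem {x y : List α} (h : x ∈ starPath y) (hxy : x ≠ y) :
    x ∈ starPath (vstar y) := by
  obtain ⟨_ | k, rfl⟩ := h
  · exact absurd rfl hxy
  · exact mem_starPath_vstar_iff.2 ⟨k, rfl⟩

theorem nil_mem_starPath (y : List α) : [] ∈ starPath y :=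
  ⟨y.length, iterate_vstar_eq_nil_iff.2 le_rfl⟩

theorem length_le_of_mem_starPath {x y : List α} (h : x ∈ starPath y) :
    x.length ≤ y.length := by
  obtain ⟨k, rfl⟩ := h
  rw [length_iterate_vstar]
  omega

/-- The second clause of `VLess` without the minimality of `s` and `t`, which `vless_iff`
recovers. -/
def BranchLT (x y : List α) : Prop :=
  ∃ s t : ℕ, vstar^[s + 1] x = vstar^[t + 1] y ∧ LastDiffLT (vstar^[s] x) (vstar^[t] y)

/-- If `s' < s`, then `x^{s*}` lies on the star path of `y` and has the length of `y^{t*}`, so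
it equals `y^{t*}`. -/
theorem le_of_iterate_vstar_succ_eq {x y : List α} {s t s' t' : ℕ}
    (h : vstar^[s + 1] x = vstar^[t + 1] y) (hne : vstar^[s] x ≠ vstar^[t] y)
    (hx : vstar^[s] x ≠ []) (hy : vstar^[t] y ≠ [])
    (h' : vstar^[s' + 1] x = vstar^[t' + 1] y) : s ≤ s' := by
  by_contra! hlt
  have hon : vstar^[s - s' - 1 + (t' + 1)] y = vstar^[s] x := by
    rw [Function.iterate_add_apply, ← h', ← Function.iterate_add_apply]
    congr 1
    omega
  have hlen : (vstar^[s] x).length = (vstar^[t] y).length := by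
    refine length_eq_of_vstar_eq hx hy ?_
    rwa [← Function.iterate_succ_apply' vstar, ← Function.iterate_succ_apply' vstar]
  rw [← hon] at hx hlen hne
  exact hne (by rw [eq_of_length_iterate_vstar_eq hx hlen])

theorem le_and_le_of_iterate_vstar_succ_eq {x y : List α} {s t s' t' : ℕ}
    (h : vstar^[s + 1] x = vstar^[t + 1] y) (hne : vstar^[s] x ≠ vstar^[t] y)
    (hx : vstar^[s] x ≠ []) (hy : vstar^[t] y ≠ [])
    (h' : vstar^[s' + 1] x = vstar^[t' + 1] y) : s ≤ s' ∧ t ≤ t' :=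
  ⟨le_of_iterate_vstar_succ_eq h hne hx hy h',
    le_of_iterate_vstar_succ_eq h.symm hne.symm hy hx h'.symm⟩

theorem vless_iff {x y : List α} :
    VLess x y ↔ x ∈ starPath (vstar y) ∨ (x ∉ starPath y ∧ y ∉ starPath x ∧ BranchLT x y) := by
  have hpath : (∃ k, 0 < k ∧ vstar^[k] y = x) ↔ x ∈ starPath (vstar y) := by
    rw [mem_starPath_vstar_iff]
    constructor
    · rintro ⟨_ | k, hk, rfl⟩
      exacts [absurd hk (lt_irrefl 0), ⟨k, rfl⟩]
    · rintro ⟨k, rfl⟩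
      exact ⟨k + 1, k.succ_pos, rfl⟩
  rw [VLess, hpath]
  refine or_congr Iff.rfl (and_congr Iff.rfl (and_congr Iff.rfl ⟨?_, ?_⟩))
  · rintro ⟨s, t, h, -, j, -, htail, a, b, ha, hb, hab⟩
    exact ⟨s, t, h, lastDiffLT_iff_exists_index.2 ⟨j, htail, a, b, ha, hb, hab⟩⟩
  · rintro ⟨s, t, h, hd⟩
    obtain ⟨j, htail, a, b, ha, hb, hab⟩ := lastDiffLT_iff_exists_index.1 hd
    exact ⟨s, t, h, fun s' t' =>
      le_and_le_of_iterate_vstar_succ_eq h hd.ne hd.ne_nil_left hd.ne_nil_right,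
      j, (List.getElem?_eq_some_iff.1 ha).1, htail, a, b, ha, hb, hab⟩

theorem exists_branch {x y : List α} (hx : x ∉ starPath y) (hy : y ∉ starPath x) :
    ∃ s t : ℕ, vstar^[s + 1] x = vstar^[t + 1] y ∧ vstar^[s] x ≠ vstar^[t] y ∧
      (vstar^[s] x).length = (vstar^[t] y).length := by
  classical
  have hs : ∃ s, vstar^[s + 1] x ∈ starPath y := by
    refine ⟨x.length, ?_⟩
    rw [iterate_vstar_eq_nil_iff.2 (by omega)]
    exact nil_mem_starPath y
  set s := Nat.find hs
  have hXs : vstar^[s] x ∉ starPath y := by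
    rcases hs' : s with _ | s'
    · exact hx
    · exact Nat.find_min hs (by omega : s' < s)
  have ht : ∃ t, vstar^[t + 1] y = vstar^[s + 1] x := by
    obtain ⟨_ | t, ht⟩ := Nat.find_spec hs
    exacts [absurd ⟨s + 1, ht.symm⟩ hy, ⟨t, ht⟩]
  set t := Nat.find ht
  have hYt : vstar^[t] y ≠ [] := by
    intro hnil
    rcases ht' : t with _ | t'
    · have hy0 : y = [] := by rw [ht'] at hnil; exact hnil
      exact hy (hy0 ▸ nil_mem_starPath x)
    · refine Nat.find_min ht (by omega : t' < t) ?_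
      rw [← Nat.find_spec ht, ← ht', Function.iterate_succ_apply', hnil]
      rfl
  have hXne : vstar^[s] x ≠ [] := fun hnil => hXs (hnil ▸ nil_mem_starPath y)
  have hst : vstar^[s + 1] x = vstar^[t + 1] y := (Nat.find_spec ht).symm
  refine ⟨s, t, hst, fun he => hXs ⟨t, he.symm⟩, length_eq_of_vstar_eq hXne hYt ?_⟩
  rwa [← Function.iterate_succ_apply' vstar, ← Function.iterate_succ_apply' vstar]

theorem vless_total {x y : List α} (hxy : x ≠ y) : VLess x y ∨ VLess y x := by
  simp only [vless_iff]
  by_cases hx : x ∈ starPath y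
  · exact Or.inl (Or.inl (mem_starPath_vstar_of_mem hx hxy))
  by_cases hy : y ∈ starPath x
  · exact Or.inr (Or.inl (mem_starPath_vstar_of_mem hy hxy.symm))
  obtain ⟨s, t, h, hne, hlen⟩ := exists_branch hx hy
  rcases lastDiffLT_or_lastDiffLT hlen hne with hd | hd
  exacts [Or.inl (Or.inr ⟨hx, hy, s, t, h, hd⟩), Or.inr (Or.inr ⟨hy, hx, t, s, h.symm, hd⟩)]

theorem vless_asymm {x y : List α} (hxy : x ≠ y) (h : VLess x y) : ¬ VLess y x := by
  rw [vless_iff] at h ⊢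
  rintro (hy | ⟨-, hx, t', s', h', hd'⟩)
  · rcases h with hx | ⟨-, hy', -⟩
    · have hlx := length_le_of_mem_starPath hx
      have hly := length_le_of_mem_starPath hy
      rw [length_vstar] at hlx hly
      have hx0 : x = [] := List.length_eq_zero_iff.1 (by omega)
      have hy0 : y = [] := List.length_eq_zero_iff.1 (by omega)
      exact hxy (hx0.trans hy0.symm)
    · exact hy' (mem_starPath_of_mem_starPath_vstar hy)
  · rcases h with hx' | ⟨-, -, s, t, h, hd⟩
    · exact hx (mem_starPath_of_mem_starPath_vstar hx')
    obtain ⟨hss, htt⟩ :=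
      le_and_le_of_iterate_vstar_succ_eq h hd.ne hd.ne_nil_left hd.ne_nil_right h'.symm
    obtain ⟨htt', hss'⟩ :=
      le_and_le_of_iterate_vstar_succ_eq h' hd'.ne hd'.ne_nil_left hd'.ne_nil_right h.symm
    obtain rfl : s = s' := le_antisymm hss hss'
    obtain rfl : t = t' := le_antisymm htt htt'
    exact hd.asymm hd'

theorem isChain_cons_iterate_vstar_succ {a : α} {x : List α} {k : ℕ}
    (h : IsChain (· ≤ ·) (a :: vstar^[k] x)) : IsChain (· ≤ ·) (a :: vstar^[k + 1] x) := by
  rw [Function.iterate_succ_apply', vstar_of_isChain h.of_cons]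
  generalize vstar^[k] x = l at h
  cases l with
  | nil => exact h
  | cons b t => exact h.of_cons.imp_head (le_trans (List.rel_of_isChain_cons_cons h))

theorem iterate_succ_vstar_cons (a : α) (x : List α) (k : ℕ) :
    vstar^[k + 1] (a :: x) =
      if IsChain (· ≤ ·) (a :: vstar^[k] x) then vstar^[k] x else a :: vstar^[k + 1] x := by
  induction k with
  | zero => rfl
  | succ k ih =>
    rw [Function.iterate_succ_apply', ih]
    by_cases hk : IsChain (· ≤ ·) (a :: vstar^[k] x)
    · rw [if_pos hk, if_pos (isChain_cons_iterate_vstar_succ hk), Function.iterate_succ_apply']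
    · rw [if_neg hk, Function.iterate_succ_apply' _ (k + 1)]
      rfl

theorem iterate_vstar_cons_of_not_isChain {a : α} {x : List α} {k : ℕ}
    (h : ¬ IsChain (· ≤ ·) (a :: vstar^[k] x)) : vstar^[k] (a :: x) = a :: vstar^[k] x := by
  cases k with
  | zero => rfl
  | succ k =>
    have hk : ¬ IsChain (· ≤ ·) (a :: vstar^[k] x) := fun hk =>
      h (isChain_cons_iterate_vstar_succ hk)
    rw [iterate_succ_vstar_cons, if_neg hk]

theorem iterate_vstar_cons_of_eq_cons {a : α} {x M : List α} {k : ℕ}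
    (h : vstar^[k] x = a :: M) : vstar^[k] (a :: x) = a :: vstar^[k] x := by
  cases k with
  | zero => rfl
  | succ k =>
    rw [iterate_succ_vstar_cons]
    split_ifs with hk
    · have hne : vstar^[k] x ≠ [] := fun h0 => by
        rw [Function.iterate_succ_apply', h0] at h
        exact List.cons_ne_nil a M h.symm
      obtain ⟨w, hw⟩ := exists_eq_cons_vstar hk.of_cons hne
      rw [← Function.iterate_succ_apply' vstar] at hw
      rw [hw, h] at hk
      have hwa : w = a := le_antisymm (List.rel_of_isChain_cons_cons hk.of_cons)
        (List.rel_of_isChain_cons_cons hk)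
      rw [hw, hwa]
    · rfl

theorem cons_mem_starPath_cons {a : α} {x y : List α} (h : a :: x ∈ starPath (a :: y)) :
    x ∈ starPath y := by
  obtain ⟨_ | k, hk⟩ := h
  · exact ⟨0, (List.cons.inj hk).2⟩
  change vstar^[k + 1] (a :: y) = a :: x at hk
  rw [iterate_succ_vstar_cons] at hk
  split_ifs at hk with hc
  · refine ⟨k + 1, ?_⟩
    change vstar^[k + 1] y = x
    rw [Function.iterate_succ_apply', hk, vstar_of_isChain (hk ▸ hc.of_cons), List.tail_cons]
  · exact ⟨k + 1, (List.cons.inj hk).2⟩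

theorem LastDiffLT.eq_cons_of_isChain {p : α} {M Q : List α} (hP : IsChain (· ≤ ·) (p :: M))
    (hQ : vstar Q = M) (h : LastDiffLT (p :: M) Q) :
    ∃ q, p < q ∧ Q = q :: M ∧ IsChain (· ≤ ·) (q :: M) := by
  induction Q generalizing p M with
  | nil => exact absurd rfl h.ne_nil_right
  | cons q Q ih =>
    by_cases hc : IsChain (· ≤ ·) (q :: Q)
    · rw [vstar_of_isChain hc, List.tail_cons] at hQ
      subst hQ
      rcases h with h | ⟨-, hpq⟩
      exacts [absurd rfl h.ne, ⟨q, hpq, rfl, hc⟩]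
    · exfalso
      rw [vstar, if_neg hc] at hQ
      subst hQ
      apply hc
      rcases h with h | ⟨hQ, -⟩
      · obtain ⟨q', hqq', hQ, hq'⟩ := ih hP.of_cons rfl h
        rw [hQ]
        exact List.isChain_cons_cons.2 ⟨hqq'.le, hq'⟩
      · rw [← hQ]
        exact List.isChain_cons_cons.2 ⟨le_rfl, hP.of_cons⟩

theorem branchLT_cons_of_isChain {a : α} {x y : List α} {s t : ℕ}
    (hst : vstar^[s + 1] x = vstar^[t + 1] y) (hd : LastDiffLT (vstar^[s] x) (vstar^[t] y))
    (hx : IsChain (· ≤ ·) (a :: vstar^[s] x)) : BranchLT (a :: x) (a :: y) := by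
  by_cases hy : IsChain (· ≤ ·) (a :: vstar^[t] y)
  · refine ⟨s + 1, t + 1, ?_, ?_⟩
    · rwa [iterate_succ_vstar_cons, if_pos (isChain_cons_iterate_vstar_succ hx),
        iterate_succ_vstar_cons, if_pos (isChain_cons_iterate_vstar_succ hy)]
    · rwa [iterate_succ_vstar_cons, if_pos hx, iterate_succ_vstar_cons, if_pos hy]
  obtain ⟨p, hp⟩ := exists_eq_cons_vstar hx.of_cons hd.ne_nil_left
  rw [← Function.iterate_succ_apply' vstar] at hp
  have hpx : IsChain (· ≤ ·) (a :: p :: vstar^[s + 1] x) := hp ▸ hx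
  rcases (List.rel_of_isChain_cons_cons hpx).eq_or_lt with rfl | hap
  · refine ⟨s, t, ?_, ?_⟩
    · rw [iterate_succ_vstar_cons, if_pos hx, iterate_succ_vstar_cons, if_neg hy, hp, hst]
    · rw [iterate_vstar_cons_of_eq_cons hp, iterate_vstar_cons_of_not_isChain hy]
      exact Or.inl hd
  · rw [hp, hst] at hd
    rw [hst] at hpx
    obtain ⟨q, hpq, hq, hqM⟩ :=
      hd.eq_cons_of_isChain hpx.of_cons (Function.iterate_succ_apply' vstar t y).symm
    exact absurd (hq ▸ List.isChain_cons_cons.2 ⟨(hap.trans hpq).le, hqM⟩) hy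

theorem branchLT_cons_of_not_isChain {a : α} {x y : List α} {s t : ℕ}
    (hst : vstar^[s + 1] x = vstar^[t + 1] y) (hd : LastDiffLT (vstar^[s] x) (vstar^[t] y))
    (hx : ¬ IsChain (· ≤ ·) (a :: vstar^[s] x)) : BranchLT (a :: x) (a :: y) := by
  have hxs := iterate_vstar_cons_of_not_isChain hx
  have hxs' : vstar^[s + 1] (a :: x) = a :: vstar^[s + 1] x := by
    rw [iterate_succ_vstar_cons, if_neg hx]
  by_cases hy : IsChain (· ≤ ·) (a :: vstar^[t] y)
  swap
  · refine ⟨s, t, ?_, ?_⟩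
    · rw [hxs', iterate_succ_vstar_cons, if_neg hy, hst]
    · rw [hxs, iterate_vstar_cons_of_not_isChain hy]
      exact Or.inl hd
  obtain ⟨q, hq⟩ := exists_eq_cons_vstar hy.of_cons hd.ne_nil_right
  rw [← Function.iterate_succ_apply' vstar] at hq
  have hqy : IsChain (· ≤ ·) (a :: q :: vstar^[t + 1] y) := hq ▸ hy
  rcases (List.rel_of_isChain_cons_cons hqy).eq_or_lt with rfl | haq
  · refine ⟨s, t, ?_, ?_⟩
    · rw [hxs', iterate_succ_vstar_cons, if_pos hy, hq, hst]
    · rw [hxs, iterate_vstar_cons_of_eq_cons hq]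
      exact Or.inl hd
  · have hy' := isChain_cons_iterate_vstar_succ hy
    refine ⟨s + 1, t + 1, ?_, ?_⟩
    · rw [iterate_succ_vstar_cons, if_pos (hst ▸ hy'), iterate_succ_vstar_cons, if_pos hy', hst]
    · rw [hxs', iterate_succ_vstar_cons, if_pos hy, hq, hst]
      exact Or.inr ⟨rfl, haq⟩

theorem BranchLT.cons (a : α) {x y : List α} (h : BranchLT x y) : BranchLT (a :: x) (a :: y) := by
  obtain ⟨s, t, hst, hd⟩ := h
  by_cases hx : IsChain (· ≤ ·) (a :: vstar^[s] x)
  exacts [branchLT_cons_of_isChain hst hd hx, branchLT_cons_of_not_isChain hst hd hx]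

theorem exists_iterate_vstar_ne_nil {x y : List α} (h : x ∈ starPath (vstar y)) (hxy : x ≠ y) :
    ∃ m, vstar^[m] y ≠ [] ∧ vstar^[m + 1] y = x := by
  obtain ⟨k, rfl⟩ := mem_starPath_vstar_iff.1 h
  clear h
  induction k with
  | zero =>
    refine ⟨0, fun hy => hxy ?_, rfl⟩
    rw [Function.iterate_zero_apply] at hy
    subst hy
    rfl
  | succ k ih =>
    by_cases hk : vstar^[k + 1] y = []
    · have hfix : vstar^[k + 1 + 1] y = vstar^[k + 1] y := by
        rw [Function.iterate_succ_apply' _ (k + 1), hk]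
        rfl
      rw [hfix] at hxy ⊢
      exact ih hxy
    · exact ⟨k + 1, hk, rfl⟩

theorem vless_cons_cons_of_mem_starPath_vstar (a : α) {x y : List α} (hxy : x ≠ y)
    (h : x ∈ starPath (vstar y)) : VLess (a :: x) (a :: y) := by
  obtain ⟨m, hW, rfl⟩ := exists_iterate_vstar_ne_nil h hxy
  rw [vless_iff]
  by_cases hc : IsChain (· ≤ ·) (a :: vstar^[m] y)
  swap
  · exact Or.inl (mem_starPath_vstar_iff.2 ⟨m, by rw [iterate_succ_vstar_cons, if_neg hc]⟩)
  have hym : vstar^[m + 1] (a :: y) = vstar^[m] y := by rw [iterate_succ_vstar_cons, if_pos hc]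
  obtain ⟨c, hcW⟩ := exists_eq_cons_vstar hc.of_cons hW
  rw [← Function.iterate_succ_apply' vstar] at hcW
  have hcy : IsChain (· ≤ ·) (a :: c :: vstar^[m + 1] y) := hcW ▸ hc
  rcases (List.rel_of_isChain_cons_cons hcy).eq_or_lt with rfl | hac
  · exact Or.inl (mem_starPath_vstar_iff.2 ⟨m, by rw [hym, hcW]⟩)
  refine Or.inr ⟨?_, ?_, 0, m + 1, ?_, ?_⟩
  · rintro ⟨n, hn⟩
    change vstar^[n] (a :: y) = a :: vstar^[m + 1] y at hn
    have hlen : (vstar^[n] (a :: y)).length = (vstar^[m + 1] (a :: y)).length := by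
      rw [hn, hym, hcW]
      rfl
    rw [eq_of_length_iterate_vstar_eq (hn ▸ List.cons_ne_nil _ _) hlen, hym, hcW] at hn
    exact hac.ne (List.cons.inj hn).1.symm
  · intro hy
    have := length_le_of_mem_starPath hy
    rw [Ne, iterate_vstar_eq_nil_iff] at hW
    simp only [List.length_cons, length_iterate_vstar] at this
    omega
  · have hy' := isChain_cons_iterate_vstar_succ hc
    show vstar (a :: _) = _
    rw [vstar_of_isChain hy', iterate_succ_vstar_cons, if_pos hy']
    rfl
  · rw [hym, hcW]
    exact Or.inr ⟨rfl, hac⟩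

theorem vless_cons_cons (a : α) {x y : List α} (hxy : x ≠ y) (h : VLess x y) :
    VLess (a :: x) (a :: y) := by
  rcases vless_iff.1 h with h | ⟨hx, hy, h⟩
  · exact vless_cons_cons_of_mem_starPath_vstar a hxy h
  · exact vless_iff.2
      (Or.inr ⟨mt cons_mem_starPath_cons hx, mt cons_mem_starPath_cons hy, h.cons a⟩)

/-- Prepending the same letter on the left preserves (and reflects) V-order:
for distinct strings `x`, `y`, `x ≺ y ⟺ λx ≺ λy`. -/
theorem vless_cons_left_iff {α : Type*} [LinearOrder α]
    (x y : List α) (lam : α) (hxy : x ≠ y) :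
    VLess x y ↔ VLess (lam :: x) (lam :: y) := by
  refine ⟨vless_cons_cons lam hxy, fun h => (vless_total hxy).resolve_right fun hyx => ?_⟩
  exact vless_asymm (fun he => hxy (List.cons.inj he).2) h (vless_cons_cons lam hxy.symm hyx)
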